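/- Upper bound for the logarithmic effective Hamiltonian: if (u, m, H̄) is a classical solution of the logarithmic ergodic MFG system, then H̄ ≤ |P|²/2. (This follows from the identity H̄ = ∫_Q [½(|P|²−|∇u|²)m − m log m − v m] dy together with v ≥ 0 and Jensen's inequality ∫_Q m log m dy ≥ (∫_Q m dy) log(∫_Q m dy) = 0.) -/

import Mathlib

open MeasureTheory Real

/-- Partial derivative in direction `i`. -/
noncomputable def pd {n : ℕ} (i : Fin n) (f : (Fin n → ℝ) → ℝ) (x : Fin n → ℝ) : ℝ :=
  fderiv ℝ f x (Pi.single i 1)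

/-- Laplacian: sum of second partial derivatives. -/
noncomputable def lap {n : ℕ} (f : (Fin n → ℝ) → ℝ) (x : Fin n → ℝ) : ℝ :=
  ∑ i, pd i (pd i f) x

/-- Divergence of a vector field. -/
noncomputable def dvg {n : ℕ} (F : (Fin n → ℝ) → Fin n → ℝ) (x : Fin n → ℝ) : ℝ :=
  ∑ i, pd i (fun y => F y i) x

/-- `ℤⁿ`-periodicity. -/
def ZPeriodic {n : ℕ} (f : (Fin n → ℝ) → ℝ) : Prop :=
  ∀ (k : Fin n → ℤ) (x : Fin n → ℝ), f (x + fun i => (k i : ℝ)) = f x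

/-- The unit cube `Q = [0,1]ⁿ`. -/
def unitCube (n : ℕ) : Set (Fin n → ℝ) := Set.Icc 0 1

/-- A classical solution `(u, m, H)` of the logarithmic ergodic MFG system
`-Δu + ½|∇u+P|² - v - log m = H`, `-Δm - div(m(∇u+P)) = 0`, `∫ u = 0`, `∫ m = 1`. -/
structure LogMFG {n : ℕ} (v : (Fin n → ℝ) → ℝ) (P : Fin n → ℝ)
    (u m : (Fin n → ℝ) → ℝ) (H : ℝ) : Prop where
  hu : ContDiff ℝ 2 u
  hm : ContDiff ℝ 2 m
  hup : ZPeriodic u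
  hmp : ZPeriodic m
  hmpos : ∀ x, 0 < m x
  hHJB : ∀ x, -lap u x + (∑ i, (pd i u x + P i) ^ 2) / 2 - v x - Real.log (m x) = H
  hFP : ∀ x, -lap m x - dvg (fun y j => m y * (pd j u y + P j)) x = 0
  humean : (∫ y in unitCube n, u y) = 0
  hmmean : (∫ y in unitCube n, m y) = 1

section helpers
variable {n : ℕ}

lemma pd_contDiff {f : (Fin n → ℝ) → ℝ} (hf : ContDiff ℝ 2 f) (i : Fin n) :
    ContDiff ℝ 1 (pd i f) := by
  have h := hf.fderiv_right (m := 1) (by norm_num)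
  exact h.clm_apply contDiff_const

lemma pd_continuous {f : (Fin n → ℝ) → ℝ} (hf : ContDiff ℝ 1 f) (i : Fin n) :
    Continuous (pd i f) :=
  (hf.continuous_fderiv one_ne_zero).clm_apply continuous_const

lemma fderiv_shift {f : (Fin n → ℝ) → ℝ} (hf : Differentiable ℝ f)
    (x c : Fin n → ℝ) (hper : (fun y => f (y + c)) = f) :
    fderiv ℝ f (x + c) = fderiv ℝ f x := by
  have h1 : HasFDerivAt (fun y => f (y + c)) (fderiv ℝ f (x + c)) x := by
    have := ((hf (x + c)).hasFDerivAt).comp x ((hasFDerivAt_id x).add_const c)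
    simpa [Function.comp_def] using this
  rw [hper] at h1
  exact h1.fderiv.symm

lemma ZPeriodic.pd {f : (Fin n → ℝ) → ℝ} (hf : Differentiable ℝ f)
    (hp : ZPeriodic f) (i : Fin n) : ZPeriodic (pd i f) := by
  intro k x
  unfold _root_.pd
  rw [fderiv_shift hf x _ (funext fun y => hp k y)]

lemma pd_mul {f g : (Fin n → ℝ) → ℝ} {x : Fin n → ℝ}
    (hf : DifferentiableAt ℝ f x) (hg : DifferentiableAt ℝ g x) (i : Fin n) :
    pd i (fun y => f y * g y) x = pd i f x * g x + f x * pd i g x := by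
  unfold pd
  rw [fderiv_fun_mul hf hg]
  simp only [ContinuousLinearMap.add_apply, ContinuousLinearMap.smul_apply, smul_eq_mul]
  ring

lemma integrableOn_unitCube {f : (Fin n → ℝ) → ℝ} (hf : Continuous f) :
    IntegrableOn f (unitCube n) := hf.integrableOn_Icc

lemma measurableSet_unitCube : MeasurableSet (unitCube n) := measurableSet_Icc

lemma volume_unitCube : volume (unitCube n) = 1 := by
  unfold unitCube
  rw [Real.volume_Icc_pi]
  simp

end helpers

section divzero
variable {k : ℕ}

lemma insertNth_one_eq {i : Fin (k+1)} (x : Fin k → ℝ) :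
    i.insertNth 1 x = i.insertNth 0 x + fun j => (((Pi.single i 1 : Fin (k+1) → ℤ) j : ℤ) : ℝ) := by
  funext j
  rcases eq_or_ne j i with rfl | hj
  · simp
  · obtain ⟨l, rfl⟩ := Fin.exists_succAbove_eq hj
    simp [Pi.single_apply, (Fin.succAbove_ne i l).symm, Fin.succAbove_ne i l]

lemma integral_div_zero (F : Fin (k+1) → (Fin (k+1) → ℝ) → ℝ)
    (hF : ∀ i, ContDiff ℝ 1 (F i)) (hFp : ∀ i, ZPeriodic (F i)) :
    (∫ x in unitCube (k+1), ∑ i, pd i (F i) x) = 0 := by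
  have hcont : Continuous fun x => ∑ i, (fderiv ℝ (F i) x) (Pi.single i 1) :=
    continuous_finset_sum _ fun i _ => pd_continuous (hF i) i
  have hdiv := integral_divergence_of_hasFDerivAt_off_countable
      (0 : Fin (k+1) → ℝ) 1 (fun _ => zero_le_one) (fun x i => F i x)
      (fun x => ContinuousLinearMap.pi fun i => fderiv ℝ (F i) x) ∅ Set.countable_empty
      (continuousOn_pi.2 fun i => (hF i).continuous.continuousOn)
      (fun x _ => hasFDerivAt_pi.2 fun i => ((hF i).differentiable one_ne_zero x).hasFDerivAt)
      (hcont.integrableOn_Icc)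
  simp only [ContinuousLinearMap.pi_apply] at hdiv
  have hQ : unitCube (k+1) = Set.Icc (0 : Fin (k+1) → ℝ) 1 := rfl
  rw [hQ]
  have hpd : ∀ x : Fin (k+1) → ℝ,
      (∑ i, pd i (F i) x) = ∑ i, (fderiv ℝ (F i) x) (Pi.single i 1) := fun x => rfl
  simp only [hpd]
  rw [hdiv]
  refine Finset.sum_eq_zero fun i _ => ?_
  have hface : ∀ x : Fin k → ℝ, F i (i.insertNth ((1 : Fin (k+1) → ℝ) i) x)
      = F i (i.insertNth ((0 : Fin (k+1) → ℝ) i) x) := by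
    intro x
    have h1 : ((1 : Fin (k+1) → ℝ) i) = (1 : ℝ) := rfl
    have h0 : ((0 : Fin (k+1) → ℝ) i) = (0 : ℝ) := rfl
    rw [h1, h0, insertNth_one_eq x, hFp i (Pi.single i 1) (i.insertNth 0 x)]
  simp only [hface, sub_self]

end divzero

/-- Upper bound for the logarithmic effective Hamiltonian. -/
theorem log_mfg_H_upper_bound {n : ℕ} (hn : 1 ≤ n)
    (v : (Fin n → ℝ) → ℝ) (hv0 : ∀ x, 0 ≤ v x) (hvlip : ∃ K, LipschitzWith K v) (hvper : ZPeriodic v)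
    (P : Fin n → ℝ) (u m : (Fin n → ℝ) → ℝ) (H : ℝ)
    (h : LogMFG v P u m H) :
    H ≤ (∑ i, (P i) ^ 2) / 2 := by
  obtain ⟨k, rfl⟩ : ∃ k, n = k + 1 := ⟨n - 1, by omega⟩
  obtain ⟨K, hK⟩ := hvlip
  have hvc : Continuous v := hK.continuous
  have hmc : Continuous m := h.hm.continuous
  have huc : Continuous u := h.hu.continuous
  have hu1 : ContDiff ℝ 1 u := h.hu.of_le one_le_two
  have hm1 : ContDiff ℝ 1 m := h.hm.of_le one_le_two
  have hdu : Differentiable ℝ u := hu1.differentiable one_ne_zero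
  have hdm : Differentiable ℝ m := hm1.differentiable one_ne_zero
  have hguC : ∀ i, ContDiff ℝ 1 (pd i u) := fun i => pd_contDiff h.hu i
  have hgmC : ∀ i, ContDiff ℝ 1 (pd i m) := fun i => pd_contDiff h.hm i
  have hgu : ∀ i, Continuous (pd i u) := fun i => (hguC i).continuous
  have hgm : ∀ i, Continuous (pd i m) := fun i => (hgmC i).continuous
  have hdgu : ∀ i, Differentiable ℝ (pd i u) := fun i => (hguC i).differentiable one_ne_zero
  have hdgm : ∀ i, Differentiable ℝ (pd i m) := fun i => (hgmC i).differentiable one_ne_zero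
  have h2u : ∀ i, Continuous (pd i (pd i u)) := fun i => pd_continuous (hguC i) i
  have h2m : ∀ i, Continuous (pd i (pd i m)) := fun i => pd_continuous (hgmC i) i
  -- the `i`-th component of the FP flux
  have hmaC : ∀ i : Fin (k+1), ContDiff ℝ 1 (fun y => m y * (pd i u y + P i)) :=
    fun i => hm1.mul ((hguC i).add contDiff_const)
  have hma : ∀ i, Continuous (fun x => pd i (fun y => m y * (pd i u y + P i)) x) :=
    fun i => pd_continuous (hmaC i) i
  have hlogc : Continuous (fun x => Real.log (m x)) := hmc.log fun x => (h.hmpos x).ne'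
  -- periodicity of derivatives
  have hpu : ∀ i, ZPeriodic (pd i u) := fun i => h.hup.pd hdu i
  have hpm : ∀ i, ZPeriodic (pd i m) := fun i => h.hmp.pd hdm i
  set Q := unitCube (k+1) with hQdef
  -- Integration by parts identity (A): ∫ Σ (∂ᵢ∂ᵢu·m + ∂ᵢu·∂ᵢm) = 0
  have hA : (∫ x in Q, ∑ i, (pd i (pd i u) x * m x + pd i u x * pd i m x)) = 0 := by
    have h0 := integral_div_zero (fun i y => pd i u y * m y)
      (fun i => (hguC i).mul hm1)
      (fun i kk x => by simp only; rw [hpu i kk x, h.hmp kk x])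
    rw [setIntegral_congr_fun (measurableSet_unitCube)
      (fun x _ => (Finset.sum_congr rfl fun i _ =>
        (pd_mul (hdgu i x) (hdm x) i : _)).symm)]
    exact h0
  -- (B): ∫ Σ (∂ᵢu·∂ᵢm + u·∂ᵢ∂ᵢm) = 0
  have hB : (∫ x in Q, ∑ i, (pd i u x * pd i m x + u x * pd i (pd i m) x)) = 0 := by
    have h0 := integral_div_zero (fun i y => u y * pd i m y)
      (fun i => hu1.mul (hgmC i))
      (fun i kk x => by simp only; rw [h.hup kk x, hpm i kk x])
    rw [setIntegral_congr_fun (measurableSet_unitCube)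
      (fun x _ => (Finset.sum_congr rfl fun i _ =>
        (pd_mul (hdu x) (hdgm i x) i : _)).symm)]
    exact h0
  -- (C): ∫ Σ (∂ᵢu·(m·aᵢ) + u·∂ᵢ(m·aᵢ)) = 0
  have hC : (∫ x in Q, ∑ i, (pd i u x * (m x * (pd i u x + P i))
      + u x * pd i (fun y => m y * (pd i u y + P i)) x)) = 0 := by
    have h0 := integral_div_zero (fun i y => u y * (m y * (pd i u y + P i)))
      (fun i => hu1.mul (hmaC i))
      (fun i kk x => by simp only; rw [h.hup kk x, h.hmp kk x, hpu i kk x])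
    rw [setIntegral_congr_fun (measurableSet_unitCube)
      (fun x _ => (Finset.sum_congr rfl fun i _ =>
        (pd_mul (hdu x) ((hdm x).fun_mul ((hdgu i x).add_const (P i))) i : _)).symm)]
    exact h0
  -- pointwise identity: W = H·m + A - B - C
  have hW : ∀ x, m x * (∑ i, (P i ^ 2 - pd i u x ^ 2)) / 2 - v x * m x - m x * Real.log (m x)
      = H * m x
        + (∑ i, (pd i (pd i u) x * m x + pd i u x * pd i m x))
        - (∑ i, (pd i u x * pd i m x + u x * pd i (pd i m) x))
        - (∑ i, (pd i u x * (m x * (pd i u x + P i))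
            + u x * pd i (fun y => m y * (pd i u y + P i)) x)) := by
    intro x
    have hjb := h.hHJB x
    have fp := h.hFP x
    simp only [lap, dvg] at hjb fp
    simp only [Finset.sum_add_distrib]
    have e1 : (∑ i, (P i ^ 2 - pd i u x ^ 2))
        = (∑ i, (pd i u x + P i) ^ 2) - 2 * ∑ i, pd i u x * (pd i u x + P i) := by
      rw [Finset.mul_sum, ← Finset.sum_sub_distrib]
      exact Finset.sum_congr rfl fun i _ => by ring
    have e2 : (∑ i, pd i u x * (m x * (pd i u x + P i)))
        = m x * ∑ i, pd i u x * (pd i u x + P i) := by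
      rw [Finset.mul_sum]; exact Finset.sum_congr rfl fun i _ => by ring
    have e3 : (∑ i, pd i (pd i u) x * m x) = (∑ i, pd i (pd i u) x) * m x :=
      (Finset.sum_mul ..).symm
    have e4 : (∑ i, u x * pd i (pd i m) x) = u x * ∑ i, pd i (pd i m) x :=
      (Finset.mul_sum ..).symm
    have e5 : (∑ i, u x * pd i (fun y => m y * (pd i u y + P i)) x)
        = u x * ∑ i, pd i (fun y => m y * (pd i u y + P i)) x :=
      (Finset.mul_sum ..).symm
    rw [e1, e2, e3, e4, e5]
    linear_combination (m x) * hjb - (u x) * fp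
  -- integrability of the pieces
  have iA : IntegrableOn (fun x => ∑ i, (pd i (pd i u) x * m x + pd i u x * pd i m x)) Q :=
    integrableOn_unitCube (continuous_finset_sum _ fun i _ =>
      ((h2u i).mul hmc).add ((hgu i).mul (hgm i)))
  have iB : IntegrableOn (fun x => ∑ i, (pd i u x * pd i m x + u x * pd i (pd i m) x)) Q :=
    integrableOn_unitCube (continuous_finset_sum _ fun i _ =>
      ((hgu i).mul (hgm i)).add (huc.mul (h2m i)))
  have iC : IntegrableOn (fun x => ∑ i, (pd i u x * (m x * (pd i u x + P i))
      + u x * pd i (fun y => m y * (pd i u y + P i)) x)) Q :=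
    integrableOn_unitCube (continuous_finset_sum _ fun i _ =>
      ((hgu i).mul (hmc.mul ((hgu i).add continuous_const))).add (huc.mul (hma i)))
  have iHm : IntegrableOn (fun x => H * m x) Q :=
    integrableOn_unitCube (continuous_const.mul hmc)
  have iW : IntegrableOn (fun x => m x * (∑ i, (P i ^ 2 - pd i u x ^ 2)) / 2
      - v x * m x - m x * Real.log (m x)) Q := by
    refine integrableOn_unitCube ?_
    refine (((hmc.mul (continuous_finset_sum _ fun i _ =>
      continuous_const.sub ((hgu i).pow 2))).div_const 2).sub (hvc.mul hmc)).sub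
      (hmc.mul hlogc)
  -- H = ∫ W
  have hHeq : H = ∫ x in Q, (m x * (∑ i, (P i ^ 2 - pd i u x ^ 2)) / 2
      - v x * m x - m x * Real.log (m x)) := by
    have : (∫ x in Q, (m x * (∑ i, (P i ^ 2 - pd i u x ^ 2)) / 2
        - v x * m x - m x * Real.log (m x)))
        = ∫ x in Q, (H * m x
          + (∑ i, (pd i (pd i u) x * m x + pd i u x * pd i m x))
          - (∑ i, (pd i u x * pd i m x + u x * pd i (pd i m) x))
          - (∑ i, (pd i u x * (m x * (pd i u x + P i))
              + u x * pd i (fun y => m y * (pd i u y + P i)) x))) := by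
      exact setIntegral_congr_fun measurableSet_unitCube fun x _ => hW x
    have i1 : IntegrableOn (fun x => H * m x
        + (∑ i, (pd i (pd i u) x * m x + pd i u x * pd i m x))) Q := iHm.add iA
    have i2 : IntegrableOn (fun x => H * m x
        + (∑ i, (pd i (pd i u) x * m x + pd i u x * pd i m x))
        - (∑ i, (pd i u x * pd i m x + u x * pd i (pd i m) x))) Q := i1.sub iB
    rw [this, integral_sub i2 iC, integral_sub i1 iB,
      integral_add iHm iA, hA, hB, hC, integral_const_mul, h.hmmean]
    ring
  -- pointwise bound W ≤ (ΣP²)/2 · m - (m - 1)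
  have hpt : ∀ x, m x * (∑ i, (P i ^ 2 - pd i u x ^ 2)) / 2 - v x * m x - m x * Real.log (m x)
      ≤ (∑ i, P i ^ 2) / 2 * m x - (m x - 1) := by
    intro x
    have h0 : 0 < m x := h.hmpos x
    have t1 : (∑ i, (P i ^ 2 - pd i u x ^ 2)) ≤ ∑ i, P i ^ 2 :=
      Finset.sum_le_sum fun i _ => sub_le_self _ (sq_nonneg _)
    have t1' : m x * (∑ i, (P i ^ 2 - pd i u x ^ 2)) / 2 ≤ m x * (∑ i, P i ^ 2) / 2 := by
      gcongr
    have t2 : 0 ≤ v x * m x := mul_nonneg (hv0 x) h0.le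
    have t3 : m x - 1 ≤ m x * Real.log (m x) := by
      have h1 := Real.log_le_sub_one_of_pos (inv_pos.2 h0)
      rw [Real.log_inv] at h1
      have h2 := mul_le_mul_of_nonneg_left h1 h0.le
      have h3 : m x * (m x)⁻¹ = 1 := mul_inv_cancel₀ h0.ne'
      nlinarith
    nlinarith
  have iRHS : IntegrableOn (fun x => (∑ i, P i ^ 2) / 2 * m x - (m x - 1)) Q :=
    integrableOn_unitCube ((continuous_const.mul hmc).sub (hmc.sub continuous_const))
  have hineq := setIntegral_mono_on iW iRHS measurableSet_unitCube fun x _ => hpt x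
  rw [← hHeq] at hineq
  have hone : (∫ _ in Q, (1 : ℝ)) = 1 := by
    rw [setIntegral_const, hQdef, measureReal_def, volume_unitCube]
    simp
  have hrhs : (∫ x in Q, ((∑ i, P i ^ 2) / 2 * m x - (m x - 1))) = (∑ i, P i ^ 2) / 2 := by
    rw [integral_sub (integrableOn_unitCube (f := fun x => (∑ i, P i ^ 2) / 2 * m x) (continuous_const.mul hmc))
        (integrableOn_unitCube (f := fun x => m x - 1) (hmc.sub continuous_const)),
      integral_sub (integrableOn_unitCube hmc) (integrableOn_unitCube continuous_const),
      integral_const_mul, h.hmmean, hone]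
    ring
  rw [hrhs] at hineq
  exact hineq
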